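/- Let M, N be symmetric positive definite n×n real matrices with M − N positive definite, and let F be any n×n real matrix and u₁, u₂ vectors with u₂ᵀ(M − N + u₁u₁ᵀ)⁻¹u₂ ≤ 1. Then (M + u₁u₁ᵀ) − (N + u₂u₂ᵀ) is positive semidefinite. -/

import Mathlib

/-!
With `A = M - N + u₁u₁ᵀ`, which is positive definite, the claim is `A - u₂u₂ᵀ ⪰ 0`. The block
matrix `[[A, u₂], [u₂ᵀ, 1]]` has Schur complement `A - u₂u₂ᵀ` with respect to its lower block
and `1 - u₂ᵀA⁻¹u₂` with respect to its upper block, so the two are positive semidefinite together.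
-/

open Matrix

namespace Matrix

variable {n K : Type*} [Fintype n] [DecidableEq n]
  [Field K] [PartialOrder K] [StarRing K] [StarOrderedRing K]

theorem PosDef.posSemidef_sub_vecMulVec_iff {A : Matrix n n K} (hA : A.PosDef) (u : n → K) :
    (A - vecMulVec u (star u)).PosSemidef ↔ star u ⬝ᵥ (A⁻¹ *ᵥ u) ≤ 1 := by
  have := hA.isUnit.invertible
  have : Invertible (1 : Matrix Unit Unit K) := invertibleOne
  let B : Matrix n Unit K := replicateCol Unit u
  have hSchur₂ : A - B * (1 : Matrix Unit Unit K)⁻¹ * Bᴴ = A - vecMulVec u (star u) := by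
    simp [B, vecMulVec_eq Unit, conjTranspose_replicateCol]
  have hSchur₁ : 1 - Bᴴ * A⁻¹ * B = diagonal fun _ => 1 - star u ⬝ᵥ (A⁻¹ *ᵥ u) := by
    ext ⟨⟩ ⟨⟩
    rw [conjTranspose_replicateCol, Matrix.mul_assoc, ← replicateCol_mulVec, sub_apply,
      replicateRow_mul_replicateCol_apply, one_apply_eq, diagonal_apply_eq]
  rw [← hSchur₂, ← PosDef.fromBlocks₂₂ A B PosDef.one, PosDef.fromBlocks₁₁ B 1 hA, hSchur₁,
    posSemidef_diagonal_iff]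
  simp only [sub_nonneg, forall_const]

end Matrix

theorem stmt16_general {n : ℕ} (M N : Matrix (Fin n) (Fin n) ℝ)
    (hMN : (M - N).PosDef)
    (u₁ u₂ : Fin n → ℝ)
    (hu : u₂ ⬝ᵥ ((M - N + vecMulVec u₁ u₁)⁻¹ *ᵥ u₂) ≤ 1) :
    ((M + vecMulVec u₁ u₁) - (N + vecMulVec u₂ u₂)).PosSemidef := by
  have hA : (M - N + vecMulVec u₁ u₁).PosDef := by
    simpa only [star_trivial] using hMN.add_posSemidef (posSemidef_vecMulVec_self_star u₁)
  have hsplit : (M + vecMulVec u₁ u₁) - (N + vecMulVec u₂ u₂)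
      = (M - N + vecMulVec u₁ u₁) - vecMulVec u₂ (star u₂) := by
    rw [star_trivial]
    abel
  rwa [hsplit, hA.posSemidef_sub_vecMulVec_iff, star_trivial]

theorem stmt16 {n : ℕ} (M N : Matrix (Fin n) (Fin n) ℝ)
    (hM : M.IsHermitian) (hN : N.IsHermitian)
    (hMN : (M - N).PosDef)
    (u₁ u₂ : Fin n → ℝ)
    (hu : u₂ ⬝ᵥ ((M - N + vecMulVec u₁ u₁)⁻¹ *ᵥ u₂) ≤ 1) :
    ((M + vecMulVec u₁ u₁) - (N + vecMulVec u₂ u₂)).PosSemidef :=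
  stmt16_general M N hMN u₁ u₂ hu
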